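/- arXiv:2301.01974 — 7 statements merged into one kernel-verified Lean document; each statement's English description precedes it below -/
import Mathlib

section
/- Let X be a real Banach space, let C be a bounded subset of X, let x be in the unit sphere S(X), and let α, δ > 0. Then d2(C, x, α) ≤ d1(C, x, δ) + 2α/δ. -/
open Metric Set Pointwise

variable {X : Type*} [NormedAddCommGroup X] [NormedSpace ℝ X]

/-- The seminorm `‖f‖_A = sup {|f x| : x ∈ A}` on the dual, for a bounded set `A ⊆ X`. -/
noncomputable def semiNormOn (A : Set X) (f : StrongDual ℝ X) : ℝ :=
  sSup ((fun x => |f x|) '' A)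

/-- `B_A(f, ε) = {g ∈ X* : ‖f − g‖_A < ε}`. -/
def ballOn (A : Set X) (f : StrongDual ℝ X) (ε : ℝ) : Set (StrongDual ℝ X) :=
  {g | semiNormOn A (f - g) < ε}

/-- `diam_A(B) = sup {‖f − g‖_A : f, g ∈ B}`. -/
noncomputable def diamOn (A : Set X) (B : Set (StrongDual ℝ X)) : ℝ :=
  sSup ((fun p : StrongDual ℝ X × StrongDual ℝ X =>
    semiNormOn A (p.1 - p.2)) '' (B ×ˢ B))

/-- The w*-slice `S(B(X*), x, δ) = {f ∈ B(X*) : f x > 1 − δ}`. -/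
def wslice (x : X) (δ : ℝ) : Set (StrongDual ℝ X) :=
  {f | ‖f‖ ≤ 1 ∧ 1 - δ < f x}

/-- `D(x) = {f ∈ S(X*) : f x = 1}`. -/
def dualD (x : X) : Set (StrongDual ℝ X) :=
  {f | ‖f‖ = 1 ∧ f x = 1}

/-- `D(E) = ⋃ {D(y) : y ∈ E}`. -/
def dualDSet (E : Set X) : Set (StrongDual ℝ X) :=
  ⋃ y ∈ E, dualD y

/-- `d1(C, x, δ) = sup {(‖x + λ y‖ + ‖x − λ y‖ − 2)/λ : 0 < λ < δ, y ∈ C}`. -/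
noncomputable def d1 (C : Set X) (x : X) (δ : ℝ) : ℝ :=
  sSup {t | ∃ l : ℝ, ∃ y ∈ C, 0 < l ∧ l < δ ∧ t = (‖x + l • y‖ + ‖x - l • y‖ - 2) / l}

/-- `d2(C, x, δ) = diam_C (S(B(X*), x, δ))`. -/
noncomputable def d2 (C : Set X) (x : X) (δ : ℝ) : ℝ :=
  diamOn C (wslice x δ)

/-- `d3(C, x, δ) = diam_C (D(S(X) ∩ B(x, δ)))`. -/
noncomputable def d3 (C : Set X) (x : X) (δ : ℝ) : ℝ :=
  diamOn C (dualDSet ({y | ‖y‖ = 1} ∩ ball x δ))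

/-- `M_{ε, δ, C}(X)`. -/
noncomputable def Mset (ε δ : ℝ) (C : Set X) : Set X :=
  {x | ‖x‖ = 1 ∧
    sSup {t | ∃ y ∈ C, 0 < ‖y‖ ∧ ‖y‖ < δ ∧ t = (‖x + y‖ + ‖x - y‖ - 2) / ‖y‖} < ε}

/-- `M_{ε, C}(X) = ⋃_{δ > 0} M_{ε, δ, C}(X)`. -/
noncomputable def MsetAll (ε : ℝ) (C : Set X) : Set X :=
  ⋃ δ > 0, Mset ε δ C

/-- A compatible class of bounded subsets of `X`. -/
structure IsCompatibleClass (𝒞 : Set (Set X)) : Prop where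
  bounded : ∀ C ∈ 𝒞, Bornology.IsBounded C
  smul_add_mem : ∀ C ∈ 𝒞, ∀ (a : ℝ) (x : X), (fun y => a • y + x) '' C ∈ 𝒞
  union_singleton_mem : ∀ C ∈ 𝒞, ∀ x : X, C ∪ {x} ∈ 𝒞
  closedAbsConvexHull_mem : ∀ C ∈ 𝒞, closure (absConvexHull ℝ C) ∈ 𝒞
  subset_mem : ∀ C ∈ 𝒞, ∀ A ⊆ C, A ∈ 𝒞
  union_mem : ∀ C₁ ∈ 𝒞, ∀ C₂ ∈ 𝒞, C₁ ∪ C₂ ∈ 𝒞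

/-- `f ∈ S(X*)` is a strong `𝒞`-semidenting point of `B(X*)`. -/
def IsStrongSemidenting (𝒞 : Set (Set X)) (f : StrongDual ℝ X) : Prop :=
  ∀ A ∈ 𝒞, ∀ ε : ℝ, 0 < ε → ∃ x : X, ‖x‖ = 1 ∧ ∃ δ : ℝ, 0 < δ ∧ δ < 1 ∧
    wslice x δ ⊆ ballOn A f ε

/-- A set is the intersection of the closed balls containing it. -/
def IsBallIntersection (D : Set X) : Prop :=
  D = ⋂₀ {B : Set X | (∃ z : X, ∃ r : ℝ, 0 < r ∧ B = closedBall z r) ∧ D ⊆ B}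

/-- `X` has the strong `𝒞`-MIP. -/
def HasStrongCMIP (𝒞 : Set (Set X)) : Prop :=
  ∀ C ∈ 𝒞, IsClosed C → Convex ℝ C → ∀ β : ℝ, 0 ≤ β →
    IsBallIntersection (closure (C + closedBall (0 : X) β))

/-- A support mapping: a selection of the duality map `D`. -/
def IsSupportMapping (φ : X → StrongDual ℝ X) : Prop :=
  ∀ x : X, ‖x‖ = 1 → φ x ∈ dualD x

/-- The duality map on `X` is norm-`τ` quasicontinuous. -/
def DualityMapQuasicontinuous (𝒞 : Set (Set X)) : Prop :=
  ∀ f : StrongDual ℝ X, ‖f‖ = 1 → ∀ ε : ℝ, 0 < ε → ∀ C ∈ 𝒞,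
    ∃ δ : ℝ, 0 < δ ∧ ∃ x : X, ‖x‖ = 1 ∧
      dualDSet ({y | ‖y‖ = 1} ∩ ball x δ) ⊆ ballOn C f ε

/-- `cone(A) = {λ a : λ ≥ 0, a ∈ A}`. -/
def coneOf (A : Set (StrongDual ℝ X)) : Set (StrongDual ℝ X) :=
  {g | ∃ l : ℝ, 0 ≤ l ∧ ∃ a ∈ A, g = l • a}

/-- `X` has the `𝒞`-UMIP. -/
def HasCUMIP (𝒞 : Set (Set X)) : Prop :=
  ∀ ε : ℝ, 0 < ε → ∀ M : ℝ, 2 ≤ M → ∃ K : ℝ, 0 < K ∧ ∃ η : ℝ, 0 < η ∧ η ≤ ε ∧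
    ∀ C ∈ 𝒞, IsClosed C → Convex ℝ C → Metric.diam C ≤ M → ε ≤ Metric.infDist 0 C →
      ∃ z₀ : X, ∃ r : ℝ, 0 < r ∧ r ≤ K ∧ C ⊆ closedBall z₀ r ∧
        η ≤ Metric.infDist 0 (closedBall z₀ r)

/-! Two functionals `f, g` of the slice `S(B(X*), x, α)` both almost norm `x`, so testing them on
`x + λ y` and `x - λ y` gives `λ (f y - g y) < ‖x + λ y‖ + ‖x - λ y‖ - 2 + 2α ≤ λ d1(C, x, δ) + 2α`
for every `0 < λ < δ`; letting `λ → δ` bounds `|f y - g y|` by `d1(C, x, δ) + 2α/δ`. -/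

theorem diamOn_le {A : Set X} {B : Set (StrongDual ℝ X)} {b : ℝ} (hb : 0 ≤ b)
    (h : ∀ f ∈ B, ∀ g ∈ B, ∀ y ∈ A, f y - g y ≤ b) : diamOn A B ≤ b := by
  refine Real.sSup_le ?_ hb
  rintro _ ⟨⟨f, g⟩, ⟨hf, hg⟩, rfl⟩
  refine Real.sSup_le ?_ hb
  rintro _ ⟨y, hy, rfl⟩
  simp only [sub_apply, abs_le]
  constructor <;> linarith [h f hf g hg y hy, h g hg f hf y hy]

theorem two_mul_norm_le_norm_add_add_norm_sub (x v : X) :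
    2 * ‖x‖ ≤ ‖x + v‖ + ‖x - v‖ :=
  calc 2 * ‖x‖ = ‖(x + v) + (x - v)‖ := by
        rw [show (x + v) + (x - v) = (2 : ℝ) • x by module, norm_smul, Real.norm_two]
    _ ≤ ‖x + v‖ + ‖x - v‖ := norm_add_le _ _

theorem d1_nonneg {C : Set X} {x : X} (hx : ‖x‖ = 1) (δ : ℝ) : 0 ≤ d1 C x δ := by
  refine Real.sSup_nonneg ?_
  rintro _ ⟨l, y, -, hl, -, rfl⟩
  have := two_mul_norm_le_norm_add_add_norm_sub x (l • y)
  exact div_nonneg (by linarith) hl.le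

theorem le_d1 {C : Set X} (hC : Bornology.IsBounded C) {x : X} (hx : ‖x‖ = 1)
    {y : X} (hy : y ∈ C) {l δ : ℝ} (hl : 0 < l) (hlδ : l < δ) :
    (‖x + l • y‖ + ‖x - l • y‖ - 2) / l ≤ d1 C x δ := by
  refine le_csSup ?_ ⟨l, y, hy, hl, hlδ, rfl⟩
  obtain ⟨M, hM⟩ := hC.subset_closedBall 0
  refine ⟨2 * M, ?_⟩
  rintro _ ⟨l, y, hy, hl, -, rfl⟩
  have hyM : ‖y‖ ≤ M := by simpa using hM hy
  have hly : ‖l • y‖ = l * ‖y‖ := by rw [norm_smul, Real.norm_of_nonneg hl.le]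
  have hplus := norm_add_le x (l • y)
  have hminus := norm_sub_le x (l • y)
  rw [div_le_iff₀ hl]
  nlinarith

theorem mul_sub_lt_of_mem_wslice {x : X} {α : ℝ} {f g : StrongDual ℝ X}
    (hf : f ∈ wslice x α) (hg : g ∈ wslice x α) (y : X) (l : ℝ) :
    l * (f y - g y) < ‖x + l • y‖ + ‖x - l • y‖ - 2 + 2 * α := by
  have hf' : f (x + l • y) ≤ ‖x + l • y‖ :=
    (le_abs_self _).trans (f.le_of_opNorm_le hf.1 _ |>.trans_eq (one_mul _))
  have hg' : g (x - l • y) ≤ ‖x - l • y‖ :=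
    (le_abs_self _).trans (g.le_of_opNorm_le hg.1 _ |>.trans_eq (one_mul _))
  simp only [map_add, map_sub, map_smul, smul_eq_mul] at hf' hg'
  linarith [hf.2, hg.2]

theorem le_add_div_of_forall_lt {a b c δ : ℝ} (hδ : 0 < δ)
    (h : ∀ l, 0 < l → l < δ → a ≤ b + c / l) : a ≤ b + c / δ := by
  have hlim : Filter.Tendsto (fun l => b + c / l) (nhdsWithin δ (Ioo 0 δ))
      (nhds (b + c / δ)) :=
    (tendsto_const_nhds.add (tendsto_const_nhds.div Filter.tendsto_id hδ.ne')).mono_left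
      nhdsWithin_le_nhds
  have : (nhdsWithin δ (Ioo 0 δ)).NeBot :=
    mem_closure_iff_nhdsWithin_neBot.mp (by rw [closure_Ioo hδ.ne]; exact ⟨hδ.le, le_rfl⟩)
  exact ge_of_tendsto hlim (eventually_nhdsWithin_of_forall fun l hl => h l hl.1 hl.2)

theorem stmt0_general (C : Set X) (hC : Bornology.IsBounded C)
    (x : X) (hx : ‖x‖ = 1) (α δ : ℝ) (hα : 0 < α) (hδ : 0 < δ) :
    d2 C x α ≤ d1 C x δ + 2 * α / δ := by
  have hbound : 0 ≤ d1 C x δ + 2 * α / δ := add_nonneg (d1_nonneg hx δ) (by positivity)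
  refine diamOn_le hbound fun f hf g hg y hy => le_add_div_of_forall_lt hδ fun l hl hlδ => ?_
  have hslice := mul_sub_lt_of_mem_wslice hf hg y l
  have hd1 := le_d1 hC hx hy hl hlδ
  calc f y - g y ≤ (‖x + l • y‖ + ‖x - l • y‖ - 2 + 2 * α) / l := by
        rw [le_div_iff₀ hl]; linarith
    _ = (‖x + l • y‖ + ‖x - l • y‖ - 2) / l + 2 * α / l := add_div _ _ _
    _ ≤ d1 C x δ + 2 * α / l := by gcongr

theorem stmt0 [CompleteSpace X] (C : Set X) (hC : Bornology.IsBounded C)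
    (x : X) (hx : ‖x‖ = 1) (α δ : ℝ) (hα : 0 < α) (hδ : 0 < δ) :
    d2 C x α ≤ d1 C x δ + 2 * α / δ :=
  stmt0_general C hC x hx α δ hα hδ
end

section
/- Let X be a real Banach space, let 𝒞 be a compatible class of bounded subsets of X, and let f ∈ S(X*). Suppose that for every C ∈ 𝒞, every ε > 0, every C₁ ∈ 𝒞 and every η > 0, there exist x ∈ M_{ε,C}(X) and g ∈ D(x) with ‖f − g‖_{C₁} < η (that is, f lies in the τ-closure of D(M_{ε,C}(X)) for every C ∈ 𝒞 and ε > 0). Then f is a strong 𝒞-semidenting point of B(X*). -/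
open Metric Set Pointwise

variable {X : Type*} [NormedAddCommGroup X] [NormedSpace ℝ X]

/-!
If `‖x‖ = 1`, `g ∈ D(x)` and `h` lies in the slice `S(B(X*), x, δ)`, evaluating `g` and `h` at
`x ± y` gives `|g y - h y| ≤ ‖x + y‖ + ‖x - y‖ - 2 + δ`, and for `x ∈ M_{η,δ₀,C}(X)` and short
`y ∈ C` the right side is at most `η ‖y‖ + δ`. The closed absolutely convex hull `C` of `A`
contains `l • A` for `0 < l ≤ 1`, so rescaling yields `|g a - h a| ≤ η ‖a‖ + δ / l` on `A`.
Choosing `g ∈ D(M_{η,C}(X))` close to `f` on `A`, then `η` and `δ / l` small, puts the whole slice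
in `B_A(f, ε)`.
-/

lemma semiNormOn_nonneg (A : Set X) (φ : StrongDual ℝ X) : 0 ≤ semiNormOn A φ :=
  Real.sSup_nonneg <| by rintro _ ⟨a, -, rfl⟩; exact abs_nonneg _

lemma abs_apply_le_semiNormOn {A : Set X} (hA : Bornology.IsBounded A) (φ : StrongDual ℝ X)
    {a : X} (ha : a ∈ A) : |φ a| ≤ semiNormOn A φ := by
  obtain ⟨R, hR⟩ := hA.exists_norm_le
  refine le_csSup ⟨‖φ‖ * R, ?_⟩ (mem_image_of_mem _ ha)
  rintro _ ⟨b, hb, rfl⟩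
  exact (φ.le_opNorm b).trans (by gcongr; exact hR b hb)

lemma semiNormOn_le {A : Set X} {φ : StrongDual ℝ X} {c : ℝ} (hc : 0 ≤ c)
    (h : ∀ a ∈ A, |φ a| ≤ c) : semiNormOn A φ ≤ c :=
  Real.sSup_le (by rintro _ ⟨a, ha, rfl⟩; exact h a ha) hc

lemma semiNormOn_sub_le_add {A : Set X} (hA : Bornology.IsBounded A) {f g k : StrongDual ℝ X}
    {c : ℝ} (hc : 0 ≤ c) (hgk : ∀ a ∈ A, |g a - k a| ≤ c) :
    semiNormOn A (f - k) ≤ semiNormOn A (f - g) + c :=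
  semiNormOn_le (add_nonneg (semiNormOn_nonneg A _) hc) fun a ha => calc
    |(f - k) a| = |(f - g) a + (g a - k a)| := by simp only [sub_apply]; ring_nf
    _ ≤ |(f - g) a| + |g a - k a| := abs_add_le _ _
    _ ≤ semiNormOn A (f - g) + c := add_le_add (abs_apply_le_semiNormOn hA _ ha) (hgk a ha)

lemma apply_le_norm_of_norm_le_one {φ : StrongDual ℝ X} (hφ : ‖φ‖ ≤ 1) (z : X) : φ z ≤ ‖z‖ :=
  (le_abs_self _).trans <| by simpa using φ.le_of_opNorm_le hφ z

lemma abs_sub_apply_le_of_mem_dualD_of_mem_wslice {x : X} {δ : ℝ} {g h : StrongDual ℝ X}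
    (hg : g ∈ dualD x) (hh : h ∈ wslice x δ) (y : X) :
    |g y - h y| ≤ ‖x + y‖ + ‖x - y‖ - 2 + δ := by
  obtain ⟨hg1, hgx⟩ := hg
  obtain ⟨hh1, hhx⟩ := hh
  have hg_add := apply_le_norm_of_norm_le_one hg1.le (x + y)
  have hg_sub := apply_le_norm_of_norm_le_one hg1.le (x - y)
  have hh_add := apply_le_norm_of_norm_le_one hh1 (x + y)
  have hh_sub := apply_le_norm_of_norm_le_one hh1 (x - y)
  simp only [map_add, map_sub] at hg_add hg_sub hh_add hh_sub
  rw [abs_le]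
  constructor <;> linarith

lemma norm_add_add_norm_sub_le_of_mem_Mset {E : Type*} [NormedAddCommGroup E] {η δ₀ : ℝ}
    {C : Set E} {x y : E} (hx : x ∈ Mset η δ₀ C) (hy : y ∈ C) (hyδ : ‖y‖ < δ₀) :
    ‖x + y‖ + ‖x - y‖ - 2 ≤ η * ‖y‖ := by
  obtain ⟨hx1, hsup⟩ := hx
  rcases eq_or_ne y 0 with rfl | hy0
  · norm_num [hx1]
  have hy0 : 0 < ‖y‖ := norm_pos_iff.mpr hy0
  have hbdd : BddAbove {t | ∃ y ∈ C, 0 < ‖y‖ ∧ ‖y‖ < δ₀ ∧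
      t = (‖x + y‖ + ‖x - y‖ - 2) / ‖y‖} := by
    refine ⟨2, ?_⟩
    rintro _ ⟨z, -, hz0, -, rfl⟩
    rw [div_le_iff₀ hz0]
    linarith [norm_add_le x z, norm_sub_le x z]
  rw [← div_le_iff₀ hy0]
  exact (le_csSup hbdd ⟨y, hy, hy0, hyδ, rfl⟩).trans hsup.le

lemma abs_sub_apply_le_of_mem_Mset {η δ₀ δ l : ℝ} {C : Set X} {x a : X} {g h : StrongDual ℝ X}
    (hx : x ∈ Mset η δ₀ C) (hg : g ∈ dualD x) (hh : h ∈ wslice x δ) (hl : 0 < l)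
    (ha : l • a ∈ C) (hla : l * ‖a‖ < δ₀) :
    |g a - h a| ≤ η * ‖a‖ + δ / l := by
  have hnorm : ‖l • a‖ = l * ‖a‖ := by rw [norm_smul, Real.norm_of_nonneg hl.le]
  have key := (abs_sub_apply_le_of_mem_dualD_of_mem_wslice hg hh (l • a)).trans
    (add_le_add_left (norm_add_add_norm_sub_le_of_mem_Mset hx ha (hnorm ▸ hla)) δ)
  simp only [map_smul, smul_eq_mul, ← mul_sub, abs_mul, abs_of_pos hl, hnorm] at key
  rw [add_div' _ _ _ hl.ne', le_div_iff₀ hl]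
  linarith

lemma semiNormOn_sub_le_of_mem_Mset {A C : Set X} {R η δ₀ δ l : ℝ} {x : X}
    {f g k : StrongDual ℝ X} (hR : 0 ≤ R) (hAR : ∀ a ∈ A, ‖a‖ ≤ R) (hη : 0 ≤ η) (hl : 0 < l)
    (hlA : ∀ a ∈ A, l • a ∈ C) (hlR : l * R < δ₀) (hx : x ∈ Mset η δ₀ C) (hg : g ∈ dualD x)
    (hk : k ∈ wslice x δ) :
    semiNormOn A (f - k) ≤ semiNormOn A (f - g) + (η * R + δ / l) := by
  have hδ : 0 < δ := by
    have := apply_le_norm_of_norm_le_one hk.1 x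
    linarith [hk.2, hx.1]
  refine semiNormOn_sub_le_add (isBounded_iff_forall_norm_le.mpr ⟨R, hAR⟩) (by positivity)
    fun a ha => (abs_sub_apply_le_of_mem_Mset hx hg hk hl (hlA a ha) ?_).trans ?_
  · exact (mul_le_mul_of_nonneg_left (hAR a ha) hl.le).trans_lt hlR
  · gcongr
    exact hAR a ha

lemma smul_mem_closure_absConvexHull {s : Set X} {l : ℝ} (hl : |l| ≤ 1) {a : X} (ha : a ∈ s) :
    l • a ∈ closure (absConvexHull ℝ s) :=
  balanced_absConvexHull.closure.smul_mem hl (subset_closure (subset_absConvexHull ha))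

theorem stmt3_general (𝒞 : Set (Set X)) (h𝒞 : IsCompatibleClass 𝒞)
    (f : StrongDual ℝ X)
    (h : ∀ C ∈ 𝒞, ∀ ε : ℝ, 0 < ε → ∀ C₁ ∈ 𝒞, ∀ η : ℝ, 0 < η →
      ∃ x ∈ MsetAll ε C, ∃ g ∈ dualD x, semiNormOn C₁ (f - g) < η) :
    IsStrongSemidenting 𝒞 f := by
  intro A hA ε hε
  obtain ⟨R, hR, hAR⟩ := (h𝒞.bounded A hA).exists_pos_norm_le
  obtain ⟨x, hxM, g, hg, hfg⟩ := h _ (h𝒞.closedAbsConvexHull_mem A hA) (ε / (3 * R))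
    (by positivity) A hA (ε / 3) (by positivity)
  obtain ⟨δ₀, hδ₀, hx⟩ := mem_iUnion₂.mp hxM
  set l := min 1 (δ₀ / (2 * R))
  have hl : 0 < l := lt_min one_pos (by positivity)
  have hlA : ∀ a ∈ A, l • a ∈ closure (absConvexHull ℝ A) := fun a =>
    smul_mem_closure_absConvexHull (by rw [abs_of_pos hl]; exact min_le_left _ _)
  have hlR : l * R < δ₀ := calc
    l * R ≤ δ₀ / (2 * R) * R := by gcongr; exact min_le_right _ _
    _ < δ₀ := by field_simp; linarith
  set δ := min (l * ε / 3) (1 / 2)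
  refine ⟨x, hx.1, δ, lt_min (by positivity) (by norm_num),
    (min_le_right _ _).trans_lt (by norm_num), fun k hk => ?_⟩
  have hδl : δ / l ≤ ε / 3 := by
    rw [div_le_iff₀ hl]; linarith [min_le_left (l * ε / 3) (1 / 2)]
  have hηR : ε / (3 * R) * R = ε / 3 := by field_simp
  have := semiNormOn_sub_le_of_mem_Mset hR.le hAR (by positivity) hl hlA hlR hx hg hk (f := f)
  change semiNormOn A (f - k) < ε
  linarith

theorem stmt3 [CompleteSpace X] (𝒞 : Set (Set X)) (h𝒞 : IsCompatibleClass 𝒞)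
    (f : StrongDual ℝ X) (hf : ‖f‖ = 1)
    (h : ∀ C ∈ 𝒞, ∀ ε : ℝ, 0 < ε → ∀ C₁ ∈ 𝒞, ∀ η : ℝ, 0 < η →
      ∃ x ∈ MsetAll ε C, ∃ g ∈ dualD x, semiNormOn C₁ (f - g) < η) :
    IsStrongSemidenting 𝒞 f :=
  stmt3_general 𝒞 h𝒞 f h
end

section
/- Let X be a real Banach space, let 𝒞 be a compatible class of bounded subsets of X, and let f ∈ S(X*) be a strong 𝒞-semidenting point of B(X*). Then for every β ≥ 0 and every closed convex C ∈ 𝒞 such that inf f(closure(C + βB(X))) > 0, there exists a closed ball B[x₀, r₀] in X containing C + βB(X) with 0 ∉ B[x₀, r₀]. -/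
open Metric Set Pointwise

variable {X : Type*} [NormedAddCommGroup X] [NormedSpace ℝ X]

/-!
Let `m > 0` be the infimum of `f` on `C + βB(X)`. Since `‖f‖ = 1`, `f ≥ m + β` on `C`. Take a
w*-slice `S(B(X*), x, δ)` inside `B_C(f, m/2)`: every `g` in it satisfies `g > m/2` on `C + βB(X)`.
For `n` large, a point `y` of `C + βB(X)` with `‖n x - y‖ > n - m/2` has a norming functional `g`
with `g x > 1 - δ`, i.e. `g` lies in the slice, whence `‖n x - y‖ = g (n x - y) < n - m/2`. So the
ball `B[n x, n - m/2]` contains `C + βB(X)` and misses `0`.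
-/

open Bornology

theorem abs_sub_apply_lt_of_mem_ballOn {A : Set X} (hA : IsBounded A) {f g : StrongDual ℝ X}
    {ε : ℝ} (hg : g ∈ ballOn A f ε) {a : X} (ha : a ∈ A) : |f a - g a| < ε := by
  obtain ⟨R, hR⟩ := isBounded_iff_forall_norm_le.1 ((f - g).lipschitz.isBounded_image hA)
  have hbdd : BddAbove ((fun x => |(f - g) x|) '' A) :=
    ⟨R, forall_mem_image.2 fun x hx => hR _ (mem_image_of_mem _ hx)⟩
  exact (le_csSup hbdd (mem_image_of_mem _ ha)).trans_lt hg

theorem add_mul_norm_le_apply_of_le_on_add_closedBall {S : Set X} {f : StrongDual ℝ X}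
    {m β : ℝ} (hβ : 0 ≤ β) (hm : ∀ z ∈ S + closedBall (0 : X) β, m ≤ f z) {c : X} (hc : c ∈ S) :
    m + β * ‖f‖ ≤ f c := by
  have hshift : ∀ u : X, ‖u‖ ≤ 1 → m ≤ f c - β * f u := fun u hu => by
    have hmem : -(β • u) ∈ closedBall (0 : X) β := by
      rw [mem_closedBall_zero_iff, norm_neg, norm_smul, Real.norm_of_nonneg hβ]
      exact mul_le_of_le_one_right hβ hu
    simpa [sub_eq_add_neg] using hm _ (add_mem_add hc hmem)
  rcases hβ.eq_or_lt with rfl | hβ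
  · simpa using hshift 0 (by simp)
  have hnorm : ‖f‖ ≤ (f c - m) / β := by
    refine f.opNorm_le_of_unit_norm (div_nonneg (by simpa using hshift 0 (by simp)) hβ.le)
      fun u hu => ?_
    have h₁ := hshift u hu.le
    have h₂ := hshift (-u) (by rw [norm_neg, hu])
    rw [map_neg] at h₂
    rw [le_div_iff₀ hβ, Real.norm_eq_abs]
    rcases abs_cases (f u) with ⟨h, -⟩ | ⟨h, -⟩ <;> rw [h] <;> linarith
  rw [le_div_iff₀ hβ] at hnorm
  linarith

theorem exists_closedBall_superset_notMem_of_lt_on_wslice {S : Set X} (hS : IsBounded S)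
    {x : X} (hx : ‖x‖ = 1) {δ a : ℝ} (hδ : 0 < δ) (ha : 0 < a)
    (hslice : ∀ g ∈ wslice x δ, ∀ y ∈ S, a < g y) :
    ∃ z : X, ∃ r : ℝ, S ⊆ closedBall z r ∧ (0 : X) ∉ closedBall z r := by
  obtain ⟨R, hR⟩ := isBounded_iff_forall_norm_le.1 hS
  obtain ⟨n, hn⟩ := exists_gt ((a + |R|) / δ)
  have hn₀ : 0 < n := lt_trans (by positivity) hn
  rw [div_lt_iff₀ hδ] at hn
  refine ⟨n • x, n - a, fun y hy => ?_, ?_⟩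
  · rw [mem_closedBall, dist_comm, dist_eq_norm]
    by_contra! hfar
    obtain ⟨g, hg, hgv⟩ := exists_dual_vector'' ℝ (n • x - y)
    have hgxy : n * g x - g y = ‖n • x - y‖ := by simpa using hgv
    have hgx : |g x| ≤ 1 := by simpa [hx] using g.le_of_opNorm_le hg x
    have hgy : |g y| ≤ ‖y‖ := by simpa using g.le_of_opNorm_le hg y
    replace hgy : -|R| ≤ g y := by linarith [neg_abs_le (g y), hR y hy, le_abs_self R]
    have hgs : g ∈ wslice x δ := by
      refine ⟨hg, lt_of_mul_lt_mul_left (a := n) ?_ hn₀.le⟩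
      linarith
    linarith [hslice g hgs y hy, mul_le_of_le_one_right hn₀.le (le_of_abs_le hgx)]
  · simp [norm_smul, hx, abs_of_pos hn₀, ha]

theorem stmt4_general (𝒞 : Set (Set X)) (h𝒞 : IsCompatibleClass 𝒞)
    (f : StrongDual ℝ X) (hf : ‖f‖ = 1)
    (h : IsStrongSemidenting 𝒞 f) :
    ∀ β : ℝ, 0 ≤ β → ∀ C ∈ 𝒞, IsClosed C → Convex ℝ C →
      0 < sInf (f '' closure (C + closedBall (0 : X) β)) →
      ∃ x₀ : X, ∃ r₀ : ℝ, C + closedBall (0 : X) β ⊆ closedBall x₀ r₀ ∧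
        (0 : X) ∉ closedBall x₀ r₀ := by
  intro β hβ C hC _ _ hm
  set m := sInf (f '' closure (C + closedBall (0 : X) β))
  have hCb : IsBounded C := h𝒞.bounded C hC
  have hSb : IsBounded (C + closedBall (0 : X) β) := hCb.add isBounded_closedBall
  have hle : ∀ z ∈ C + closedBall (0 : X) β, m ≤ f z := fun z hz =>
    csInf_le (f.lipschitz.isBounded_image hSb.closure).bddBelow
      (mem_image_of_mem f (subset_closure hz))
  obtain ⟨x, hx, δ, hδ, -, hδslice⟩ := h C hC (m / 2) (half_pos hm)
  refine exists_closedBall_superset_notMem_of_lt_on_wslice hSb hx hδ (half_pos hm) ?_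
  rintro g hgs _ ⟨c, hc, b, hb, rfl⟩
  have hfc : m + β ≤ f c := by
    simpa [hf] using add_mul_norm_le_apply_of_le_on_add_closedBall hβ hle hc
  have hfgc := abs_sub_apply_lt_of_mem_ballOn hCb (hδslice hgs) hc
  have hgb : |g b| ≤ β := by
    simpa using (g.le_of_opNorm_le hgs.1 b).trans (by simpa using mem_closedBall_zero_iff.1 hb)
  rw [map_add]
  linarith [abs_lt.1 hfgc, abs_le.1 hgb]

theorem stmt4 [CompleteSpace X] (𝒞 : Set (Set X)) (h𝒞 : IsCompatibleClass 𝒞)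
    (f : StrongDual ℝ X) (hf : ‖f‖ = 1)
    (h : IsStrongSemidenting 𝒞 f) :
    ∀ β : ℝ, 0 ≤ β → ∀ C ∈ 𝒞, IsClosed C → Convex ℝ C →
      0 < sInf (f '' closure (C + closedBall (0 : X) β)) →
      ∃ x₀ : X, ∃ r₀ : ℝ, C + closedBall (0 : X) β ⊆ closedBall x₀ r₀ ∧
        (0 : X) ∉ closedBall x₀ r₀ :=
  stmt4_general 𝒞 h𝒞 f hf h
end

section
/- Let X be a real Banach space, let 𝒞 be a compatible class of bounded subsets of X, and let f ∈ S(X*) be a strong 𝒞-semidenting point of B(X*). Then for every ε > 0 and every C ∈ 𝒞, there exist δ > 0 and x ∈ S(X) such that D(S(X) ∩ B(x, δ)) ⊆ B_C(f, ε). -/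
open Metric Set Pointwise

variable {X : Type*} [NormedAddCommGroup X] [NormedSpace ℝ X]

theorem dualDSet_mono {E F : Set X} (hEF : E ⊆ F) : dualDSet E ⊆ dualDSet F :=
  biUnion_subset_biUnion_left hEF

theorem one_sub_dist_lt_apply_of_mem_dualD {x y : X} {δ : ℝ} {g : StrongDual ℝ X}
    (hg : g ∈ dualD y) (hxy : dist x y < δ) : 1 - δ < g x := by
  obtain ⟨hg_norm, hgy⟩ := hg
  have h_apply : |g (x - y)| ≤ dist x y := by
    simpa [hg_norm, dist_eq_norm] using g.le_opNorm (x - y)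
  have h_split : g x = g y + g (x - y) := by rw [map_sub]; ring
  linarith [neg_abs_le (g (x - y))]

theorem dualDSet_ball_subset_wslice (x : X) (δ : ℝ) : dualDSet (ball x δ) ⊆ wslice x δ := by
  intro g hg
  simp only [dualDSet, mem_iUnion] at hg
  obtain ⟨y, hy, hgy⟩ := hg
  exact ⟨hgy.1.le, one_sub_dist_lt_apply_of_mem_dualD hgy (mem_ball'.mp hy)⟩

theorem stmt6_general (𝒞 : Set (Set X))
    (f : StrongDual ℝ X)
    (h : IsStrongSemidenting 𝒞 f) :
    ∀ ε : ℝ, 0 < ε → ∀ C ∈ 𝒞, ∃ δ : ℝ, 0 < δ ∧ ∃ x : X, ‖x‖ = 1 ∧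
      dualDSet ({y | ‖y‖ = 1} ∩ ball x δ) ⊆ ballOn C f ε := by
  intro ε hε C hC
  obtain ⟨x, hx, δ, hδ, -, hslice⟩ := h C hC ε hε
  exact ⟨δ, hδ, x, hx, (dualDSet_mono inter_subset_right).trans
    ((dualDSet_ball_subset_wslice x δ).trans hslice)⟩

theorem stmt6 [CompleteSpace X] (𝒞 : Set (Set X)) (h𝒞 : IsCompatibleClass 𝒞)
    (f : StrongDual ℝ X) (hf : ‖f‖ = 1)
    (h : IsStrongSemidenting 𝒞 f) :
    ∀ ε : ℝ, 0 < ε → ∀ C ∈ 𝒞, ∃ δ : ℝ, 0 < δ ∧ ∃ x : X, ‖x‖ = 1 ∧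
      dualDSet ({y | ‖y‖ = 1} ∩ ball x δ) ⊆ ballOn C f ε :=
  stmt6_general 𝒞 f h
end

section
/- Let X be a real Banach space and let 𝒞 be a compatible class of bounded subsets of X. If the duality map on X is norm-τ quasicontinuous, then for every norm-dense subset A ⊆ S(X) and every support mapping φ : S(X) → S(X*), the set φ(A) is τ-dense in S(X*), i.e., for every f ∈ S(X*), every C ∈ 𝒞 and every ε > 0 there exists x₀ ∈ A with ‖f − φ(x₀)‖_C < ε. -/
open Metric Set Pointwise

variable {X : Type*} [NormedAddCommGroup X] [NormedSpace ℝ X]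

theorem IsSupportMapping.mem_dualDSet_sphere_inter_ball {φ : X → StrongDual ℝ X}
    (hφ : IsSupportMapping φ) {x y : X} {δ : ℝ} (hy : ‖y‖ = 1) (hyx : dist y x < δ) :
    φ y ∈ dualDSet ({z | ‖z‖ = 1} ∩ ball x δ) :=
  mem_biUnion ⟨hy, hyx⟩ (hφ y hy)

theorem stmt10_general (𝒞 : Set (Set X))
    (h : DualityMapQuasicontinuous 𝒞) :
    ∀ A : Set X, A ⊆ {x : X | ‖x‖ = 1} → {x : X | ‖x‖ = 1} ⊆ closure A →
      ∀ φ : X → StrongDual ℝ X, IsSupportMapping φ →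
        ∀ f : StrongDual ℝ X, ‖f‖ = 1 → ∀ C ∈ 𝒞, ∀ ε : ℝ, 0 < ε →
          ∃ x₀ ∈ A, semiNormOn C (f - φ x₀) < ε := by
  intro A hAS hSA φ hφ f hf C hC ε hε
  obtain ⟨δ, hδ, x, hx, hsub⟩ := h f hf ε hε C hC
  obtain ⟨x₀, hx₀A, hxx₀⟩ := Metric.mem_closure_iff.mp (hSA hx) δ hδ
  rw [dist_comm] at hxx₀
  exact ⟨x₀, hx₀A, hsub (hφ.mem_dualDSet_sphere_inter_ball (hAS hx₀A) hxx₀)⟩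

theorem stmt10 [CompleteSpace X] (𝒞 : Set (Set X)) (h𝒞 : IsCompatibleClass 𝒞)
    (h : DualityMapQuasicontinuous 𝒞) :
    ∀ A : Set X, A ⊆ {x : X | ‖x‖ = 1} → {x : X | ‖x‖ = 1} ⊆ closure A →
      ∀ φ : X → StrongDual ℝ X, IsSupportMapping φ →
        ∀ f : StrongDual ℝ X, ‖f‖ = 1 → ∀ C ∈ 𝒞, ∀ ε : ℝ, 0 < ε →
          ∃ x₀ ∈ A, semiNormOn C (f - φ x₀) < ε :=
  stmt10_general 𝒞 h
end

section
/- Let X be a real Banach space and let 𝒞 be a compatible class of bounded subsets of X. Suppose that for every norm-dense subset A ⊆ S(X) and every support mapping φ : S(X) → S(X*), the set φ(A) is τ-dense in S(X*), i.e., for every f ∈ S(X*), every C ∈ 𝒞 and every ε > 0 there exists x₀ ∈ A with ‖f − φ(x₀)‖_C < ε. Then the duality map on X is norm-τ quasicontinuous. -/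
/-!
Suppose the duality map fails to be quasicontinuous at `f`, `ε`, `C`. Then every ball around
every point of `S(X)` meets `S(X)` in some `y` carrying a functional `g ∈ D(y)` with
`‖f - g‖_C ≥ ε`, so these "bad" points form a dense subset `A` of `S(X)`. A support mapping that
selects such a bad functional at each point of `A` has `φ(A)` disjoint from `B_C(f, ε)`,
contradicting the density hypothesis.
-/

open Metric Set Pointwise

variable {X : Type*} [NormedAddCommGroup X] [NormedSpace ℝ X]

theorem dualD_nonempty {x : X} (hx : ‖x‖ = 1) : (dualD x).Nonempty := by
  obtain ⟨g, hg, hgx⟩ := exists_dual_vector ℝ x (by rw [hx]; exact one_ne_zero)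
  exact ⟨g, hg, by rw [hgx, hx, RCLike.ofReal_one]⟩

theorem exists_isSupportMapping_forall_mem {A : Set X} {P : StrongDual ℝ X → Prop}
    (hA : ∀ y ∈ A, ∃ g ∈ dualD y, P g) :
    ∃ φ : X → StrongDual ℝ X, IsSupportMapping φ ∧ ∀ y ∈ A, P (φ y) := by
  have hchoice : ∀ y : X, ∃ g : StrongDual ℝ X, (‖y‖ = 1 → g ∈ dualD y) ∧ (y ∈ A → P g) := by
    intro y
    by_cases hyA : y ∈ A
    · obtain ⟨g, hg, hPg⟩ := hA y hyA
      exact ⟨g, fun _ => hg, fun _ => hPg⟩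
    · by_cases hy : ‖y‖ = 1
      · obtain ⟨g, hg⟩ := dualD_nonempty hy
        exact ⟨g, fun _ => hg, fun h => absurd h hyA⟩
      · exact ⟨0, fun h => absurd h hy, fun h => absurd h hyA⟩
  choose φ hφD hφP using hchoice
  exact ⟨φ, hφD, hφP⟩

theorem sphere_subset_closure_of_forall_not_dualDSet_subset {U : Set (StrongDual ℝ X)}
    (hU : ∀ δ > 0, ∀ x : X, ‖x‖ = 1 → ¬ dualDSet ({y | ‖y‖ = 1} ∩ ball x δ) ⊆ U) :
    {x : X | ‖x‖ = 1} ⊆ closure {y : X | ‖y‖ = 1 ∧ ∃ g ∈ dualD y, g ∉ U} := by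
  intro x hx
  rw [Metric.mem_closure_iff]
  intro δ hδ
  obtain ⟨g, hg, hgU⟩ := not_subset.1 (hU δ hδ x hx)
  obtain ⟨y, ⟨hy, hyx⟩, hgy⟩ := mem_iUnion₂.1 hg
  exact ⟨y, ⟨hy, g, hgy, hgU⟩, by rwa [dist_comm]⟩

theorem stmt11_general (𝒞 : Set (Set X))
    (h : ∀ A : Set X, A ⊆ {x : X | ‖x‖ = 1} → {x : X | ‖x‖ = 1} ⊆ closure A →
      ∀ φ : X → StrongDual ℝ X, IsSupportMapping φ →
        ∀ f : StrongDual ℝ X, ‖f‖ = 1 → ∀ C ∈ 𝒞, ∀ ε : ℝ, 0 < ε →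
          ∃ x₀ ∈ A, semiNormOn C (f - φ x₀) < ε) :
    DualityMapQuasicontinuous 𝒞 := by
  intro f hf ε hε C hC
  by_contra hcon
  have hdense := sphere_subset_closure_of_forall_not_dualDSet_subset (U := ballOn C f ε)
    fun δ hδ x hx hsub => hcon ⟨δ, hδ, x, hx, hsub⟩
  obtain ⟨φ, hφ, hφbad⟩ := exists_isSupportMapping_forall_mem
    (A := {y : X | ‖y‖ = 1 ∧ ∃ g ∈ dualD y, g ∉ ballOn C f ε}) fun y hy => hy.2
  obtain ⟨x₀, hx₀, hlt⟩ := h _ (fun y hy => hy.1) hdense φ hφ f hf C hC ε hε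
  exact hφbad x₀ hx₀ hlt

theorem stmt11 [CompleteSpace X] (𝒞 : Set (Set X)) (h𝒞 : IsCompatibleClass 𝒞)
    (h : ∀ A : Set X, A ⊆ {x : X | ‖x‖ = 1} → {x : X | ‖x‖ = 1} ⊆ closure A →
      ∀ φ : X → StrongDual ℝ X, IsSupportMapping φ →
        ∀ f : StrongDual ℝ X, ‖f‖ = 1 → ∀ C ∈ 𝒞, ∀ ε : ℝ, 0 < ε →
          ∃ x₀ ∈ A, semiNormOn C (f - φ x₀) < ε) :
    DualityMapQuasicontinuous 𝒞 :=
  stmt11_general 𝒞 h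
end

section
/- Let X be a real Banach space and let A ⊆ X be nonempty and bounded with M = sup{‖x‖ : x ∈ A} and d = dist(0, A) > 0. Suppose there exist x₀ ∈ S(X) and 0 < γ < 1 such that every f ∈ B(X*) with f(x₀) > γ satisfies f(x) > 0 for all x ∈ A. Then for every λ ≥ M/(1 − γ), A ⊆ B[λx₀, λ − d(1 − γ)/(1 + γ)]. -/
open Metric Set Pointwise

variable {X : Type*} [NormedAddCommGroup X] [NormedSpace ℝ X]

/-! For `φ, h ∈ B(X*)` and `t ≥ 0` the functional `(φ + t h) / (1 + t)` stays in `B(X*)`, so the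
slice hypothesis forces it to be positive on `A` as soon as its value at `x₀` exceeds `γ`. Taking
for `h` a norming functional of `-x` (for `x ∈ A`), and letting `t` grow up to the largest value
the slice condition allows, gives `φ x ≥ ‖x‖ (φ x₀ - γ) / (1 + γ)` whenever `φ x₀ > γ`; taking for
`h` a norming functional of `x₀` gives `φ x ≥ -‖x‖ (γ - φ x₀) / (1 - γ)` whenever `φ x₀ ≤ γ`.
Evaluating a norming functional of `λ x₀ - x` and using `d ≤ ‖x‖ ≤ M ≤ λ (1 - γ)`, both bounds
give `‖λ x₀ - x‖ ≤ λ - d (1 - γ) / (1 + γ)`. -/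

lemma norm_inv_one_add_smul_add_smul_le_one {E : Type*} [SeminormedAddCommGroup E]
    [NormedSpace ℝ E] {u v : E} (hu : ‖u‖ ≤ 1) (hv : ‖v‖ ≤ 1) {t : ℝ} (ht : 0 ≤ t) :
    ‖(1 + t)⁻¹ • (u + t • v)‖ ≤ 1 := by
  have h1t : 0 < 1 + t := by linarith
  calc ‖(1 + t)⁻¹ • (u + t • v)‖ = (1 + t)⁻¹ * ‖u + t • v‖ := by
        rw [norm_smul, Real.norm_of_nonneg (inv_nonneg.2 h1t.le)]
    _ ≤ (1 + t)⁻¹ * (1 + t) := by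
        gcongr
        calc ‖u + t • v‖ ≤ ‖u‖ + t * ‖v‖ := by
              simpa [norm_smul, abs_of_nonneg ht] using norm_add_le u (t • v)
          _ ≤ 1 + t := by nlinarith
    _ = 1 := inv_mul_cancel₀ h1t.ne'

lemma apply_le_norm_of_norm_le_one_s15 {f : StrongDual ℝ X} (hf : ‖f‖ ≤ 1) (y : X) : f y ≤ ‖y‖ :=
  calc f y ≤ ‖f y‖ := le_abs_self _
    _ ≤ ‖f‖ * ‖y‖ := f.le_opNorm y
    _ ≤ ‖y‖ := mul_le_of_le_one_left (norm_nonneg y) hf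

section Slice

variable {A : Set X} {x₀ : X} {γ : ℝ}
  (hS : ∀ f : StrongDual ℝ X, ‖f‖ ≤ 1 → γ < f x₀ → ∀ x ∈ A, 0 < f x)
include hS

lemma pos_add_mul_of_slice {φ h : StrongDual ℝ X} (hφ : ‖φ‖ ≤ 1) (hh : ‖h‖ ≤ 1) {t : ℝ}
    (ht : 0 ≤ t) (hx₀ : (1 + t) * γ < φ x₀ + t * h x₀) {x : X} (hx : x ∈ A) :
    0 < φ x + t * h x := by
  have h1t : 0 < 1 + t := by linarith
  have hψ := hS _ (norm_inv_one_add_smul_add_smul_le_one hφ hh ht)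
  simp only [smul_apply, add_apply, smul_eq_mul, lt_inv_mul_iff₀ h1t] at hψ
  simpa [h1t] using hψ hx₀ x hx

lemma mul_norm_le_apply_of_slice (hx₀ : ‖x₀‖ ≤ 1) (hγ : 0 < 1 + γ) {φ : StrongDual ℝ X}
    (hφ : ‖φ‖ ≤ 1) (hφx₀ : γ < φ x₀) {x : X} (hx : x ∈ A) :
    (φ x₀ - γ) / (1 + γ) * ‖x‖ ≤ φ x := by
  obtain ⟨h, hh, hhx⟩ := exists_dual_vector'' ℝ x
  have hhx₀ : h x₀ ≤ 1 := (apply_le_norm_of_norm_le_one_s15 hh x₀).trans hx₀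
  have hc : 0 < (φ x₀ - γ) / (1 + γ) := div_pos (by linarith) hγ
  have key : ∀ t ∈ Ioo 0 ((φ x₀ - γ) / (1 + γ)), t * ‖x‖ ≤ φ x := by
    rintro t ⟨ht0, htc⟩
    rw [lt_div_iff₀ hγ] at htc
    have := pos_add_mul_of_slice hS hφ (norm_neg h ▸ hh) ht0.le (by rw [neg_apply]; nlinarith) hx
    simp only [neg_apply, hhx, Real.ringHom_apply, mul_neg] at this
    linarith
  refine le_on_closure key (by fun_prop) continuousOn_const ?_
  rw [closure_Ioo hc.ne]
  exact right_mem_Icc.2 hc.le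

lemma neg_mul_norm_le_apply_of_slice (hx₀ : ‖x₀‖ = 1) (hγ : γ < 1) {φ : StrongDual ℝ X}
    (hφ : ‖φ‖ ≤ 1) (hφx₀ : φ x₀ ≤ γ) {x : X} (hx : x ∈ A) :
    -((γ - φ x₀) / (1 - γ) * ‖x‖) ≤ φ x := by
  obtain ⟨g, hg, hgx₀⟩ := exists_dual_vector'' ℝ x₀
  have hgx : g x ≤ ‖x‖ := apply_le_norm_of_norm_le_one_s15 hg x
  have hc : 0 ≤ (γ - φ x₀) / (1 - γ) := div_nonneg (by linarith) (by linarith)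
  have key : ∀ t ∈ Ioi ((γ - φ x₀) / (1 - γ)), -(t * ‖x‖) ≤ φ x := by
    intro t htc
    have ht0 : 0 ≤ t := hc.trans htc.le
    rw [mem_Ioi, div_lt_iff₀ (by linarith)] at htc
    have := pos_add_mul_of_slice hS hφ hg ht0
      (by simp only [hgx₀, hx₀, Real.ringHom_apply]; nlinarith) hx
    nlinarith
  refine le_on_closure key (by fun_prop) continuousOn_const ?_
  rw [closure_Ioi]
  exact self_mem_Ici

lemma mul_sub_apply_le_of_slice (hx₀ : ‖x₀‖ = 1) (hγ0 : 0 ≤ γ) (hγ1 : γ < 1) {d M lam : ℝ}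
    {x : X} (hx : x ∈ A) (hdx : d ≤ ‖x‖) (hxM : ‖x‖ ≤ M) (hlam : M / (1 - γ) ≤ lam)
    {φ : StrongDual ℝ X} (hφ : ‖φ‖ ≤ 1) :
    lam * φ x₀ - φ x ≤ lam - d * (1 - γ) / (1 + γ) := by
  have hxlam : ‖x‖ / (1 - γ) ≤ lam := (div_le_div_of_nonneg_right hxM (by linarith)).trans hlam
  have hdlam : d / (1 + γ) ≤ lam := by
    rw [div_le_iff₀ (by linarith)]
    rw [div_le_iff₀ (by linarith)] at hxlam
    nlinarith [norm_nonneg x]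
  have hφx₀ : φ x₀ ≤ 1 := hx₀ ▸ apply_le_norm_of_norm_le_one_s15 hφ x₀
  have hd : d * (1 - γ) / (1 + γ) = d / (1 + γ) * (1 - γ) := by ring
  rcases lt_or_ge γ (φ x₀) with hγφ | hφγ
  · have hφx := mul_norm_le_apply_of_slice hS hx₀.le (by linarith) hφ hγφ hx
    have hc : 0 ≤ (φ x₀ - γ) / (1 + γ) := div_nonneg (by linarith) (by linarith)
    have hc' : (φ x₀ - γ) / (1 + γ) * d = d / (1 + γ) * (φ x₀ - γ) := by ring
    nlinarith [mul_le_mul_of_nonneg_left hdx hc,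
      mul_le_mul_of_nonneg_left hdlam (sub_nonneg.2 hφx₀)]
  · have hφx := neg_mul_norm_le_apply_of_slice hS hx₀ hγ1 hφ hφγ hx
    have hc' : (γ - φ x₀) / (1 - γ) * ‖x‖ = (γ - φ x₀) * (‖x‖ / (1 - γ)) := by ring
    nlinarith [mul_le_mul_of_nonneg_left hxlam (sub_nonneg.2 hφγ),
      mul_le_mul_of_nonneg_left hdlam (sub_nonneg.2 hγ1.le)]

end Slice

theorem stmt15_general (A : Set X)
    (hbd : Bornology.IsBounded A)
    (M d : ℝ) (hM : M = sSup ((fun x => ‖x‖) '' A)) (hd : d = Metric.infDist 0 A)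
    (x₀ : X) (hx₀ : ‖x₀‖ = 1) (γ : ℝ) (hγ0 : 0 < γ) (hγ1 : γ < 1)
    (hS : ∀ f : StrongDual ℝ X, ‖f‖ ≤ 1 → γ < f x₀ → ∀ x ∈ A, 0 < f x) :
    ∀ lam : ℝ, M / (1 - γ) ≤ lam →
      A ⊆ closedBall (lam • x₀) (lam - d * (1 - γ) / (1 + γ)) := by
  intro lam hlam x hx
  have hdx : d ≤ ‖x‖ := by simpa [hd] using infDist_le_dist_of_mem (x := (0 : X)) hx
  have hxM : ‖x‖ ≤ M := by
    obtain ⟨R, hR⟩ := isBounded_iff_forall_norm_le.mp hbd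
    exact hM ▸ le_csSup ⟨R, forall_mem_image.2 hR⟩ (mem_image_of_mem _ hx)
  obtain ⟨φ, hφ, hφx⟩ := exists_dual_vector'' ℝ (lam • x₀ - x)
  rw [mem_closedBall, dist_eq_norm']
  rw [← show φ (lam • x₀ - x) = ‖lam • x₀ - x‖ from hφx, map_sub, map_smul, smul_eq_mul]
  exact mul_sub_apply_le_of_slice hS hx₀ hγ0.le hγ1 hx hdx hxM hlam hφ

theorem stmt15 [CompleteSpace X] (A : Set X) (hne : A.Nonempty)
    (hbd : Bornology.IsBounded A)
    (M d : ℝ) (hM : M = sSup ((fun x => ‖x‖) '' A)) (hd : d = Metric.infDist 0 A)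
    (hd0 : 0 < d) (x₀ : X) (hx₀ : ‖x₀‖ = 1) (γ : ℝ) (hγ0 : 0 < γ) (hγ1 : γ < 1)
    (hS : ∀ f : StrongDual ℝ X, ‖f‖ ≤ 1 → γ < f x₀ → ∀ x ∈ A, 0 < f x) :
    ∀ lam : ℝ, M / (1 - γ) ≤ lam →
      A ⊆ closedBall (lam • x₀) (lam - d * (1 - γ) / (1 + γ)) :=
  stmt15_general A hbd M d hM hd x₀ hx₀ γ hγ0 hγ1 hS
end
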